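/- arXiv:2402.06348 — 5 statements merged into one kernel-verified Lean document; each statement's English description precedes it below -/
import Mathlib

section
/- (Estimation error of the merit.) Let P and P* be two transition models with all entries P(s,a,1), P*(s,a,1) ∈ [0,1], let d(s,a) ≥ 0 for s,a ∈ {0,1}, and let ω₁, η₁, ω₂, η₂ ∈ ℝ satisfy: (i) −1 ≤ ω₁ ≤ η₁ < 1 and −1 ≤ ω₂ ≤ η₂ < 1; (ii) ω₁ ≤ P(1,1,1) − P(0,1,1) ≤ η₁ and ω₁ ≤ P*(1,1,1) − P*(0,1,1) ≤ η₁; (iii) ω₂ ≤ P(1,0,1) − P(0,0,1) ≤ η₂ and ω₂ ≤ P*(1,0,1) − P*(0,0,1) ≤ η₂; (iv) |P(s,a,1) − P*(s,a,1)| ≤ d(s,a)/2 for all s,a; (v) η₁ − ω₁ ≤ d(1,1) + d(0,1) and η₂ − ω₂ ≤ d(1,0) + d(0,0). Then |μ(P) − μ(P*)| ≤ (d(1,1) + 2d(0,1)) / ((1−η₁)(1−ω₁)) + (d(1,0) + 2d(0,0)) / ((1−η₂)(1−ω₂)). Consequently, if η = max{η₁, η₂} and ω = max{ω₁, ω₂}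 with η, ω < 1, then |μ(P) − μ(P*)| ≤ (d(1,1) + 2d(0,1) + d(1,0) + 2d(0,0)) / ((1−η)(1−ω)). -/
/-!
The stationary probability of state 1 is `p / (1 - δ)` with `δ = q - p` ranging over
`[ω, η]`. Splitting the error into a change of the numerator and a change of the denominator,
the first part is at most `|p - p'| / (1 - η) ≤ d / ((1 - η) (1 - ω))` because `1 - ω ≤ 2`,
and the second is at most `p' ≤ 1` times the oscillation of `δ ↦ 1 / (1 - δ)` on `[ω, η]`,
which is `(η - ω) / ((1 - η) (1 - ω))`; the gap condition bounds `η - ω` by the radii.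
-/

/-- The merit of an arm with transition model `P` (`P s a` denotes `P(s,a,1)`):
the difference of steady-state probabilities of being in state 1 under always
pulling versus never pulling. -/
noncomputable def merit (P : Fin 2 → Fin 2 → ℝ) : ℝ :=
  P 0 1 / (1 - P 1 1 + P 0 1) - P 0 0 / (1 - P 1 0 + P 0 0)

open Set

/-- The stationary probability of state 1 of the two-state chain with `p = P(0 → 1)` and
`q = P(1 → 1)`. -/
noncomputable def steadyStateOne (p q : ℝ) : ℝ := p / (1 - q + p)

lemma merit_eq_steadyStateOne_sub (P : Fin 2 → Fin 2 → ℝ) :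
    merit P = steadyStateOne (P 0 1) (P 1 1) - steadyStateOne (P 0 0) (P 1 0) := rfl

lemma abs_one_div_one_sub_sub_le {δ δ' ω η : ℝ} (hδ : δ ∈ Icc ω η) (hδ' : δ' ∈ Icc ω η)
    (hη : η < 1) :
    |1 / (1 - δ) - 1 / (1 - δ')| ≤ (η - ω) / ((1 - η) * (1 - ω)) := by
  have hω : ω < 1 := hδ.1.trans_lt (hδ.2.trans_lt hη)
  have mem {t : ℝ} (ht : t ∈ Icc ω η) : 1 / (1 - t) ∈ Icc (1 / (1 - ω)) (1 / (1 - η)) :=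
    ⟨one_div_le_one_div_of_le (by linarith [ht.2]) (by linarith [ht.1]),
      one_div_le_one_div_of_le (by linarith) (by linarith [ht.2])⟩
  calc |1 / (1 - δ) - 1 / (1 - δ')| ≤ 1 / (1 - η) - 1 / (1 - ω) :=
        Real.dist_le_of_mem_Icc (mem hδ) (mem hδ')
    _ = (η - ω) / ((1 - η) * (1 - ω)) := by
        field_simp [sub_ne_zero.2 hη.ne', sub_ne_zero.2 hω.ne']
        ring

lemma steadyStateOne_sub_steadyStateOne {p q p' q' : ℝ} (h : 1 - (q - p) ≠ 0)
    (h' : 1 - (q' - p') ≠ 0) :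
    steadyStateOne p q - steadyStateOne p' q' =
      (p - p') / (1 - (q - p)) + p' * (1 / (1 - (q - p)) - 1 / (1 - (q' - p'))) := by
  unfold steadyStateOne
  rw [show 1 - q + p = 1 - (q - p) by ring, show 1 - q' + p' = 1 - (q' - p') by ring]
  field_simp
  ring

lemma abs_steadyStateOne_sub_le {p q p' q' ω η dp dq : ℝ} (hp'₀ : 0 ≤ p') (hp'₁ : p' ≤ 1)
    (hω : -1 ≤ ω) (hη : η < 1) (hδ : q - p ∈ Icc ω η) (hδ' : q' - p' ∈ Icc ω η)
    (hdp : |p - p'| ≤ dp / 2) (hgap : η - ω ≤ dq + dp) :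
    |steadyStateOne p q - steadyStateOne p' q'| ≤ (dq + 2 * dp) / ((1 - η) * (1 - ω)) := by
  have hη' : 0 < 1 - η := by linarith
  have hω' : 0 < 1 - ω := by linarith [hδ.1, hδ.2]
  have hden : 1 - η ≤ 1 - (q - p) := by linarith [hδ.2]
  have hden' : 1 - η ≤ 1 - (q' - p') := by linarith [hδ'.2]
  have hdp₀ : 0 ≤ dp := by linarith [abs_nonneg (p - p')]
  have numerator : |(p - p') / (1 - (q - p))| ≤ dp / ((1 - η) * (1 - ω)) := by
    rw [abs_div, abs_of_pos (hη'.trans_le hden)]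
    calc |p - p'| / (1 - (q - p)) ≤ dp / 2 / (1 - η) := div_le_div₀ (by positivity) hdp hη' hden
      _ ≤ dp / ((1 - η) * (1 - ω)) := by
        rw [div_div, mul_comm 2]
        gcongr
        linarith
  have denominator : |p' * (1 / (1 - (q - p)) - 1 / (1 - (q' - p')))| ≤
      (dq + dp) / ((1 - η) * (1 - ω)) := by
    rw [abs_mul, abs_of_nonneg hp'₀]
    calc p' * |1 / (1 - (q - p)) - 1 / (1 - (q' - p'))| ≤ 1 * ((η - ω) / ((1 - η) * (1 - ω))) :=
          mul_le_mul hp'₁ (abs_one_div_one_sub_sub_le hδ hδ' hη) (abs_nonneg _) zero_le_one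
      _ ≤ (dq + dp) / ((1 - η) * (1 - ω)) := by
        rw [one_mul]
        gcongr
  rw [steadyStateOne_sub_steadyStateOne (by linarith) (by linarith)]
  calc _ ≤ _ := abs_add_le _ _
    _ ≤ dp / ((1 - η) * (1 - ω)) + (dq + dp) / ((1 - η) * (1 - ω)) :=
        add_le_add numerator denominator
    _ = (dq + 2 * dp) / ((1 - η) * (1 - ω)) := by ring

lemma div_one_sub_mul_one_sub_le {a η ω η' ω' : ℝ} (ha : 0 ≤ a) (hη : η ≤ η') (hω : ω ≤ ω')
    (hη' : η' < 1) (hω' : ω' < 1) :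
    a / ((1 - η) * (1 - ω)) ≤ a / ((1 - η') * (1 - ω')) := by
  have : 0 < 1 - η' := by linarith
  have : 0 < 1 - ω' := by linarith
  gcongr
  linarith

theorem merit_estimation_error_general
    (P Ps : Fin 2 → Fin 2 → ℝ) (d : Fin 2 → Fin 2 → ℝ)
    (hPs : ∀ s a : Fin 2, 0 ≤ Ps s a ∧ Ps s a ≤ 1)
    (ω₁ η₁ ω₂ η₂ : ℝ)
    (h1 : -1 ≤ ω₁ ∧ ω₁ ≤ η₁ ∧ η₁ < 1)
    (h2 : -1 ≤ ω₂ ∧ ω₂ ≤ η₂ ∧ η₂ < 1)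
    (hc1 : ω₁ ≤ P 1 1 - P 0 1 ∧ P 1 1 - P 0 1 ≤ η₁)
    (hc1s : ω₁ ≤ Ps 1 1 - Ps 0 1 ∧ Ps 1 1 - Ps 0 1 ≤ η₁)
    (hc2 : ω₂ ≤ P 1 0 - P 0 0 ∧ P 1 0 - P 0 0 ≤ η₂)
    (hc2s : ω₂ ≤ Ps 1 0 - Ps 0 0 ∧ Ps 1 0 - Ps 0 0 ≤ η₂)
    (hdist : ∀ s a : Fin 2, |P s a - Ps s a| ≤ d s a / 2)
    (hgap1 : η₁ - ω₁ ≤ d 1 1 + d 0 1)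
    (hgap2 : η₂ - ω₂ ≤ d 1 0 + d 0 0) :
    |merit P - merit Ps| ≤
      (d 1 1 + 2 * d 0 1) / ((1 - η₁) * (1 - ω₁)) +
      (d 1 0 + 2 * d 0 0) / ((1 - η₂) * (1 - ω₂)) ∧
    |merit P - merit Ps| ≤
      (d 1 1 + 2 * d 0 1 + d 1 0 + 2 * d 0 0) /
        ((1 - max η₁ η₂) * (1 - max ω₁ ω₂)) := by
  have hd (s a : Fin 2) : 0 ≤ d s a := by linarith [abs_nonneg (P s a - Ps s a), hdist s a]
  have hpull := abs_steadyStateOne_sub_le (hPs 0 1).1 (hPs 0 1).2 h1.1 h1.2.2 hc1 hc1s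
    (hdist 0 1) hgap1
  have hidle := abs_steadyStateOne_sub_le (hPs 0 0).1 (hPs 0 0).2 h2.1 h2.2.2 hc2 hc2s
    (hdist 0 0) hgap2
  have hsplit : |merit P - merit Ps| ≤
      (d 1 1 + 2 * d 0 1) / ((1 - η₁) * (1 - ω₁)) +
      (d 1 0 + 2 * d 0 0) / ((1 - η₂) * (1 - ω₂)) := by
    rw [merit_eq_steadyStateOne_sub, merit_eq_steadyStateOne_sub, sub_sub_sub_comm]
    exact (abs_sub _ _).trans (add_le_add hpull hidle)
  have hη : max η₁ η₂ < 1 := max_lt h1.2.2 h2.2.2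
  have hω : max ω₁ ω₂ < 1 := (max_le_max h1.2.1 h2.2.1).trans_lt hη
  refine ⟨hsplit, hsplit.trans ?_⟩
  calc _ ≤ (d 1 1 + 2 * d 0 1) / ((1 - max η₁ η₂) * (1 - max ω₁ ω₂)) +
        (d 1 0 + 2 * d 0 0) / ((1 - max η₁ η₂) * (1 - max ω₁ ω₂)) :=
        add_le_add
          (div_one_sub_mul_one_sub_le (by linarith [hd 1 1, hd 0 1]) (le_max_left _ _)
            (le_max_left _ _) hη hω)
          (div_one_sub_mul_one_sub_le (by linarith [hd 1 0, hd 0 0]) (le_max_right _ _)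
            (le_max_right _ _) hη hω)
    _ = _ := by ring

/-- estimation error of the merit. -/
theorem merit_estimation_error
    (P Ps : Fin 2 → Fin 2 → ℝ) (d : Fin 2 → Fin 2 → ℝ)
    (hP : ∀ s a : Fin 2, 0 ≤ P s a ∧ P s a ≤ 1)
    (hPs : ∀ s a : Fin 2, 0 ≤ Ps s a ∧ Ps s a ≤ 1)
    (hd : ∀ s a : Fin 2, 0 ≤ d s a)
    (ω₁ η₁ ω₂ η₂ : ℝ)
    (h1 : -1 ≤ ω₁ ∧ ω₁ ≤ η₁ ∧ η₁ < 1)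
    (h2 : -1 ≤ ω₂ ∧ ω₂ ≤ η₂ ∧ η₂ < 1)
    (hc1 : ω₁ ≤ P 1 1 - P 0 1 ∧ P 1 1 - P 0 1 ≤ η₁)
    (hc1s : ω₁ ≤ Ps 1 1 - Ps 0 1 ∧ Ps 1 1 - Ps 0 1 ≤ η₁)
    (hc2 : ω₂ ≤ P 1 0 - P 0 0 ∧ P 1 0 - P 0 0 ≤ η₂)
    (hc2s : ω₂ ≤ Ps 1 0 - Ps 0 0 ∧ Ps 1 0 - Ps 0 0 ≤ η₂)
    (hdist : ∀ s a : Fin 2, |P s a - Ps s a| ≤ d s a / 2)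
    (hgap1 : η₁ - ω₁ ≤ d 1 1 + d 0 1)
    (hgap2 : η₂ - ω₂ ≤ d 1 0 + d 0 0) :
    |merit P - merit Ps| ≤
      (d 1 1 + 2 * d 0 1) / ((1 - η₁) * (1 - ω₁)) +
      (d 1 0 + 2 * d 0 0) / ((1 - η₂) * (1 - ω₂)) ∧
    |merit P - merit Ps| ≤
      (d 1 1 + 2 * d 0 1 + d 1 0 + 2 * d 0 0) /
        ((1 - max η₁ η₂) * (1 - max ω₁ ω₂)) :=
  merit_estimation_error_general P Ps d hPs ω₁ η₁ ω₂ η₂ h1 h2 hc1 hc1s hc2 hc2s hdist hgap1 hgap2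
end

section
/- (Per-episode fairness regret bound.) Let N ≥ 1, let γ > 0 and L > 0, and let g : ℝ → ℝ satisfy g(x) ≥ γ for all x and |g(x) − g(y)| ≤ L|x − y| for all x, y. For any μ, μ* : {1,…,N} → ℝ, define π_i = g(μ_i)/Σ_{j=1}^N g(μ_j) and π*_i = g(μ*_i)/Σ_{j=1}^N g(μ*_j). Then Σ_{i=1}^N |π_i − π*_i| ≤ (2/(Nγ)) Σ_{i=1}^N |g(μ_i) − g(μ*_i)| ≤ (2L/(Nγ)) Σ_{i=1}^N |μ_i − μ*_i|. -/
/-!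
With `a_i = g(μ_i)`, `b_i = g(μ*_i)`, `S = ∑ a`, `T = ∑ b` and `D = ∑ |a_i - b_i| ≥ |S - T|`,
the splitting `a_i/S - b_i/T = (a_i - b_i)/S + b_i (T - S)/(S T)` gives
`∑ |π_i - π*_i| ≤ (D + |S - T|)/S ≤ 2D/S`. Since `g ≥ γ`, `S ≥ Nγ`, and the Lipschitz bound
turns `D` into at most `L ∑ |μ_i - μ*_i|`.
-/

open Finset

theorem sum_abs_div_sum_sub_div_sum_le {ι : Type*} [Fintype ι] (a b : ι → ℝ)
    (hb : ∀ i, 0 ≤ b i) (hS : 0 < ∑ j, a j) (hT : 0 < ∑ j, b j) :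
    ∑ i, |a i / ∑ j, a j - b i / ∑ j, b j| ≤ 2 * (∑ i, |a i - b i|) / ∑ j, a j := by
  set S := ∑ j, a j
  set T := ∑ j, b j
  set D := ∑ i, |a i - b i|
  have hST : |S - T| ≤ D := by
    simpa only [S, T, D, sum_sub_distrib] using abs_sum_le_sum_abs (fun i ↦ a i - b i) univ
  have split (i : ι) : |a i / S - b i / T| ≤ |a i - b i| / S + b i * (|S - T| / (S * T)) := by
    have hid : a i / S - b i / T = (a i - b i) / S + b i * ((T - S) / (S * T)) := by
      field_simp
      ring
    rw [hid]
    refine (abs_add_le _ _).trans_eq ?_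
    rw [abs_div, abs_of_pos hS, abs_mul, abs_of_nonneg (hb i), abs_div,
      abs_of_pos (mul_pos hS hT), abs_sub_comm T S]
  calc ∑ i, |a i / S - b i / T|
      ≤ ∑ i, (|a i - b i| / S + b i * (|S - T| / (S * T))) := sum_le_sum fun i _ ↦ split i
    _ = D / S + |S - T| / S := by
      rw [sum_add_distrib, ← sum_div, ← sum_mul]
      change D / S + T * (|S - T| / (S * T)) = _
      field_simp
    _ ≤ 2 * D / S := by
      rw [mul_div_assoc, two_mul]
      gcongr

theorem per_episode_fairness_regret_general
    (N : ℕ) (hN : 1 ≤ N) (γ L : ℝ) (hγ : 0 < γ)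
    (g : ℝ → ℝ) (hg : ∀ x : ℝ, γ ≤ g x)
    (hLip : ∀ x y : ℝ, |g x - g y| ≤ L * |x - y|)
    (μ μs : Fin N → ℝ) :
    (∑ i, |g (μ i) / (∑ j, g (μ j)) - g (μs i) / (∑ j, g (μs j))|) ≤
      (2 / (N * γ)) * ∑ i, |g (μ i) - g (μs i)| ∧
    (2 / (N * γ)) * (∑ i, |g (μ i) - g (μs i)|) ≤
      (2 * L / (N * γ)) * ∑ i, |μ i - μs i| := by
  have hNγ : 0 < (N : ℝ) * γ := mul_pos (by exact_mod_cast hN) hγ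
  have mass_ge (ν : Fin N → ℝ) : (N : ℝ) * γ ≤ ∑ j, g (ν j) := by
    simpa using card_nsmul_le_sum univ (fun j ↦ g (ν j)) γ fun j _ ↦ hg (ν j)
  have hg_nonneg (x : ℝ) : 0 ≤ g x := hγ.le.trans (hg x)
  constructor
  · calc _ ≤ 2 * (∑ i, |g (μ i) - g (μs i)|) / ∑ j, g (μ j) :=
          sum_abs_div_sum_sub_div_sum_le _ _ (fun i ↦ hg_nonneg _)
            (hNγ.trans_le (mass_ge μ)) (hNγ.trans_le (mass_ge μs))
      _ ≤ 2 * (∑ i, |g (μ i) - g (μs i)|) / (N * γ) := by gcongr; exact mass_ge μ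
      _ = _ := by ring
  · rw [mul_div_right_comm, mul_assoc]
    gcongr
    simpa only [mul_sum] using sum_le_sum fun i _ ↦ hLip (μ i) (μs i)

/-- per-episode fairness regret bound. -/
theorem per_episode_fairness_regret
    (N : ℕ) (hN : 1 ≤ N) (γ L : ℝ) (hγ : 0 < γ) (hL : 0 < L)
    (g : ℝ → ℝ) (hg : ∀ x : ℝ, γ ≤ g x)
    (hLip : ∀ x y : ℝ, |g x - g y| ≤ L * |x - y|)
    (μ μs : Fin N → ℝ) :
    (∑ i, |g (μ i) / (∑ j, g (μ j)) - g (μs i) / (∑ j, g (μs j))|) ≤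
      (2 / (N * γ)) * ∑ i, |g (μ i) - g (μs i)| ∧
    (2 / (N * γ)) * (∑ i, |g (μ i) - g (μs i)|) ≤
      (2 * L / (N * γ)) * ∑ i, |μ i - μs i| :=
  per_episode_fairness_regret_general N hN γ L hγ g hg hLip μ μs
end

section
/- Let G ≥ 1 be an integer and let a : ℕ → ℕ satisfy a(t+G) ≥ a(t) + 1 for every t ≥ 1. Then for every integer T ≥ 1, Σ_{t=1}^T 1/√(max(1, a(t))) ≤ G + 2√(G·T). -/
lemma sum_one_div_sqrt_le (n : ℕ) :
    ∑ u ∈ Finset.Icc 1 n, (1:ℝ)/Real.sqrt u ≤ 2 * Real.sqrt n := by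
  induction n with
  | zero => simp
  | succ n ih =>
    rw [Finset.sum_Icc_succ_top (by omega)]
    have hr : Real.sqrt (n+1) > 0 := Real.sqrt_pos.2 (by positivity)
    have hs : Real.sqrt n ≥ 0 := Real.sqrt_nonneg n
    have hr2 : Real.sqrt (n+1) ^ 2 = (n:ℝ)+1 := by
      rw [Real.sq_sqrt (by positivity)]
    have hs2 : Real.sqrt n ^ 2 = (n:ℝ) := Real.sq_sqrt (by positivity)
    have key : (1:ℝ)/Real.sqrt ((n:ℕ)+1) ≤ 2 * Real.sqrt (n+1) - 2 * Real.sqrt n := by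
      rw [div_le_iff₀ (by push_cast; exact hr)]
      push_cast
      nlinarith [hr, hs, hr2, hs2]
    push_cast at *
    linarith [ih]

lemma div_le_a (G : ℕ) (hG : 1 ≤ G) (a : ℕ → ℕ)
    (ha : ∀ t : ℕ, 1 ≤ t → a t + 1 ≤ a (t + G)) :
    ∀ t, 1 ≤ t → (t-1)/G ≤ a t := by
  intro t
  induction t using Nat.strong_induction_on with
  | _ t ih =>
    intro ht
    by_cases h : t ≤ G
    · have h0 : (t-1)/G = 0 := Nat.div_eq_of_lt (by omega)
      simp [h0]
    · push_neg at h
      have h1 : 1 ≤ t - G := by omega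
      have hih := ih (t - G) (by omega) h1
      have ha' := ha (t - G) h1
      rw [Nat.sub_add_cancel (le_of_lt h)] at ha'
      have heq : (t-1)/G = (t-G-1)/G + 1 := by
        have h2 : t - 1 = (t - G - 1) + G := by omega
        rw [h2, Nat.add_div_right _ (by omega)]
      omega

/-- cumulative confidence-radius sum bound. -/
theorem sum_inv_sqrt_counts_bound
    (G : ℕ) (hG : 1 ≤ G) (a : ℕ → ℕ)
    (ha : ∀ t : ℕ, 1 ≤ t → a t + 1 ≤ a (t + G))
    (T : ℕ) (hT : 1 ≤ T) :
    ∑ t ∈ Finset.Icc 1 T, (1 : ℝ) / Real.sqrt (max 1 (a t) : ℕ) ≤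
      G + 2 * Real.sqrt ((G : ℝ) * T) := by
  have term_le_one : ∀ t : ℕ, (1:ℝ)/Real.sqrt (max 1 (a t) : ℕ) ≤ 1 := by
    intro t
    have h1 : (1:ℝ) ≤ (max 1 (a t) : ℕ) := by
      exact_mod_cast Nat.one_le_iff_ne_zero.2 (by positivity)
    have h2 : (1:ℝ) ≤ Real.sqrt (max 1 (a t) : ℕ) := by
      rw [show (1:ℝ) = Real.sqrt 1 by simp]
      exact Real.sqrt_le_sqrt h1
    rw [div_le_one (by linarith)]
    linarith
  have hsqnn : (0:ℝ) ≤ 2 * Real.sqrt ((G:ℝ) * T) := by positivity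
  by_cases hTG : T ≤ G
  · calc ∑ t ∈ Finset.Icc 1 T, (1 : ℝ) / Real.sqrt (max 1 (a t) : ℕ)
        ≤ ∑ t ∈ Finset.Icc 1 T, (1:ℝ) := Finset.sum_le_sum (fun t _ => term_le_one t)
      _ = T := by simp
      _ ≤ G := by exact_mod_cast hTG
      _ ≤ G + 2 * Real.sqrt ((G : ℝ) * T) := by linarith
  · push_neg at hTG
    have hsplit : Finset.Icc 1 T = Finset.Ioc 0 G ∪ Finset.Ioc G T := by
      ext x; simp [Finset.mem_Icc, Finset.mem_Ioc]; omega
    have hdisj : Disjoint (Finset.Ioc 0 G) (Finset.Ioc G T) := by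
      rw [Finset.disjoint_left]; intro x hx hy
      simp [Finset.mem_Ioc] at hx hy; omega
    rw [hsplit, Finset.sum_union hdisj]
    have hb1 : ∑ t ∈ Finset.Ioc 0 G, (1 : ℝ) / Real.sqrt (max 1 (a t) : ℕ) ≤ G := by
      calc ∑ t ∈ Finset.Ioc 0 G, (1 : ℝ) / Real.sqrt (max 1 (a t) : ℕ)
          ≤ ∑ t ∈ Finset.Ioc 0 G, (1:ℝ) := Finset.sum_le_sum (fun t _ => term_le_one t)
        _ = G := by simp
    have hb2 : ∑ t ∈ Finset.Ioc G T, (1 : ℝ) / Real.sqrt (max 1 (a t) : ℕ)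
        ≤ 2 * Real.sqrt ((G:ℝ) * T) := by
      have step : ∀ t ∈ Finset.Ioc G T,
          (1 : ℝ) / Real.sqrt (max 1 (a t) : ℕ) ≤ Real.sqrt G / Real.sqrt ((t:ℕ) - G : ℕ) := by
        intro t htmem
        rw [Finset.mem_Ioc] at htmem
        obtain ⟨hGt, htT⟩ := htmem
        have hdiv : (t-1)/G ≤ a t := div_le_a G hG a ha t (by omega)
        have h1le : 1 ≤ (t-1)/G := Nat.one_le_div_iff (by omega) |>.2 (by omega)
        have hmax : max 1 (a t) = a t := max_eq_right (by omega)
        -- G * ((t-1)/G) ≥ t - G  in ℕ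
        have hnat : t - G ≤ G * ((t-1)/G) := by
          have h1 := Nat.div_add_mod (t-1) G
          have h2 := Nat.mod_lt (t-1) (show 0 < G by omega)
          omega
        have hreal : ((t:ℝ) - G) / G ≤ (max 1 (a t) : ℕ) := by
          rw [hmax]
          rw [div_le_iff₀ (by exact_mod_cast hG : (0:ℝ) < G)]
          have h1 : ((t - G : ℕ):ℝ) ≤ ((G * ((t-1)/G) : ℕ):ℝ) := by exact_mod_cast hnat
          push_cast [Nat.cast_sub (le_of_lt hGt)] at h1
          have h2 : ((((t-1)/G : ℕ)):ℝ) ≤ (a t : ℝ) := by exact_mod_cast hdiv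
          have hGpos : (0:ℝ) < G := by exact_mod_cast hG
          nlinarith
        have hsq : Real.sqrt (((t:ℝ) - G) / G) ≤ Real.sqrt (max 1 (a t) : ℕ) :=
          Real.sqrt_le_sqrt hreal
        have htG : ((t - G : ℕ):ℝ) = (t:ℝ) - G := by
          push_cast [Nat.cast_sub (le_of_lt hGt)]; ring
        have hGr : (G:ℝ) < t := by exact_mod_cast hGt
        have hx : (0:ℝ) ≤ (t:ℝ) - G := by linarith
        rw [Real.sqrt_div hx] at hsq
        rw [htG]
        have hpos : (0:ℝ) < Real.sqrt ((t:ℝ) - G) / Real.sqrt G := by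
          apply div_pos (Real.sqrt_pos.2 (by linarith)) (Real.sqrt_pos.2 (by exact_mod_cast hG))
        have h := one_div_le_one_div_of_le hpos hsq
        rw [one_div_div] at h
        exact h
      have hmap : Finset.Ioc G T = Finset.map (addLeftEmbedding G) (Finset.Ioc 0 (T - G)) := by
        rw [Finset.map_add_left_Ioc]
        congr 1 <;> omega
      calc ∑ t ∈ Finset.Ioc G T, (1 : ℝ) / Real.sqrt (max 1 (a t) : ℕ)
          ≤ ∑ t ∈ Finset.Ioc G T, Real.sqrt G / Real.sqrt ((t - G : ℕ)) :=
            Finset.sum_le_sum step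
        _ = ∑ u ∈ Finset.Ioc 0 (T - G), Real.sqrt G / Real.sqrt ((G + u - G : ℕ)) := by
            rw [hmap, Finset.sum_map]; rfl
        _ = ∑ u ∈ Finset.Ioc 0 (T - G), Real.sqrt G / Real.sqrt (u:ℕ) := by
            apply Finset.sum_congr rfl
            intro u _
            have h : G + u - G = u := by omega
            rw [h]
        _ = Real.sqrt G * ∑ u ∈ Finset.Icc 1 (T - G), (1:ℝ) / Real.sqrt u := by
            have hIcc : Finset.Icc 1 (T - G) = Finset.Ioc 0 (T - G) := by
              ext x; simp [Finset.mem_Icc, Finset.mem_Ioc]; omega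
            rw [hIcc, Finset.mul_sum]
            exact Finset.sum_congr rfl (fun u _ => by rw [mul_one_div])
        _ ≤ Real.sqrt G * (2 * Real.sqrt (T - G : ℕ)) := by
            apply mul_le_mul_of_nonneg_left (sum_one_div_sqrt_le (T - G)) (Real.sqrt_nonneg _)
        _ ≤ 2 * Real.sqrt ((G:ℝ) * T) := by
            rw [show Real.sqrt G * (2 * Real.sqrt ((T - G : ℕ):ℝ)) = 2 * (Real.sqrt G * Real.sqrt ((T-G:ℕ):ℝ)) by ring, ← Real.sqrt_mul (by positivity)]
            have hle : (G:ℝ) * ((T - G : ℕ):ℝ) ≤ (G:ℝ) * T := by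
              apply mul_le_mul_of_nonneg_left _ (by positivity)
              exact_mod_cast Nat.sub_le T G
            linarith [Real.sqrt_le_sqrt hle]
    linarith
end

section
/- (Infeasibility of meritocratic fairness for multiple pulls with a dominant arm.) Let N ≥ 1, K ≥ 1 be integers and m : {1,…,N} → ℝ with m_i > 0 for all i. Suppose Pr : {1,…,N} → ℝ satisfies Σ_{i=1}^N Pr_i = K and Pr_i/m_i = Pr_j/m_j for all i, j. Then Pr_i = K·m_i/Σ_{j=1}^N m_j for every i; in particular, if some arm l satisfies (K−1)·m_l > Σ_{i≠l} m_i, then Pr_l > 1, so Pr cannot be a vector of probabilities. -/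
/-- infeasibility of meritocratic fairness for multiple pulls with
a dominant arm. -/
theorem multiple_pull_fairness_infeasible
    (N K : ℕ) (hN : 1 ≤ N) (hK : 1 ≤ K)
    (m : Fin N → ℝ) (hm : ∀ i, 0 < m i)
    (Pr : Fin N → ℝ) (hsum : (∑ i, Pr i) = K)
    (hfair : ∀ i j : Fin N, Pr i / m i = Pr j / m j) :
    (∀ i, Pr i = K * m i / ∑ j, m j) ∧
    ∀ l : Fin N,
      (K - 1 : ℝ) * m l > (∑ i ∈ Finset.univ.erase l, m i) → Pr l > 1 := by
  have i0 : Fin N := ⟨0, hN⟩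
  set c : ℝ := Pr i0 / m i0 with hc
  have hPr : ∀ i, Pr i = c * m i := by
    intro i
    have h := hfair i i0
    field_simp [(hm i).ne', (hm i0).ne'] at h
    rw [hc]
    field_simp [(hm i0).ne']
    linarith
  have hS : (0 : ℝ) < ∑ j, m j :=
    Finset.sum_pos (fun j _ => hm j) ⟨i0, Finset.mem_univ _⟩
  have hKc : (K : ℝ) = c * ∑ j, m j := by
    rw [← hsum, Finset.mul_sum]
    exact Finset.sum_congr rfl fun i _ => hPr i
  have hcval : c = K / ∑ j, m j := by
    field_simp [hS.ne'] at hKc ⊢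
    linarith
  have main : ∀ i, Pr i = K * m i / ∑ j, m j := by
    intro i
    rw [hPr i, hcval]
    ring
  refine ⟨main, fun l hl => ?_⟩
  have hsplit : (∑ j, m j) = m l + ∑ i ∈ Finset.univ.erase l, m i := by
    rw [← Finset.add_sum_erase _ _ (Finset.mem_univ l)]
  rw [main l, gt_iff_lt, lt_div_iff₀ hS, one_mul, hsplit]
  nlinarith [hm l]
end

section
/- (Deterministic fairness-regret bound, Theorem 3 skeleton.) Let N ≥ 2, G ≥ 1, t₀ ≥ 0, T > t₀ be integers, let 0 < δ ≤ 1, γ > 0, L > 0, and let ω ≤ η < 1 be reals. Let g : ℝ → ℝ satisfy g(x) ≥ γ and |g(x) − g(y)| ≤ L|x−y| for all x, y. For each arm i ∈ {1,…,N} and each pair s,a ∈ {0,1}, let n_i(t,s,a) ∈ ℕ satisfy n_i(t+G,s,a) ≥ n_i(t,s,a) + 1 for all t ≥ 1, and define d_i^t(s,a) = √(4·ln(8N t⁴/δ)/max(1, n_i(t,s,a))). Let μ^t, μ* : {1,…,N} → ℝ satisfy, for all t with t₀ < t ≤ T and all i, |μ_i^t − μ*_i| ≤ (d_i^t(1,1)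 + 2d_i^t(0,1) + d_i^t(1,0) + 2d_i^t(0,0)) / ((1−η)(1−ω)). Define π_i^t = g(μ_i^t)/Σ_j g(μ_j^t) and π*_i = g(μ*_i)/Σ_j g(μ*_j). Then the fairness regret satisfies Σ_{t=1}^T Σ_{i=1}^N |π*_i − π_i^t| ≤ N·t₀ + 48·L·√(ln(8NT/δ))·(G + 2√(G·T)) / (γ(1−η)(1−ω)); in particular, if G ≤ T this is at most N·t₀ + 144·L·√(G·T·ln(8NT/δ)) / (γ(1−η)(1−ω)). -/
lemma aux_sqrt_sum (K : ℕ) :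
    ∑ k ∈ Finset.Icc 1 K, 1 / Real.sqrt k ≤ 2 * Real.sqrt K := by
  induction K with
  | zero => simp
  | succ K ih =>
    rw [Finset.sum_Icc_succ_top (by omega)]
    have hs : Real.sqrt K ≤ Real.sqrt (K + 1) := by
      apply Real.sqrt_le_sqrt; push_cast; linarith
    have hu : (0:ℝ) < Real.sqrt (K + 1) := by positivity
    have hK : Real.sqrt K ^ 2 = K := Real.sq_sqrt (by positivity)
    have hK1 : Real.sqrt (K + 1) ^ 2 = (K:ℝ) + 1 := Real.sq_sqrt (by positivity)
    have key : 1 / Real.sqrt ((K:ℝ) + 1) ≤ 2 * Real.sqrt (K+1) - 2 * Real.sqrt K := by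
      rw [div_le_iff₀ hu]
      nlinarith [sq_nonneg (Real.sqrt (K+1) - Real.sqrt K), Real.sqrt_nonneg K]
    push_cast
    linarith

lemma aux_group (G M : ℕ) (hG : 1 ≤ G) (f : ℕ → ℝ) :
    ∑ j ∈ Finset.range (G * M), f (j / G) = G * ∑ k ∈ Finset.range M, f k := by
  induction M with
  | zero => simp
  | succ M ih =>
    have h1 : G * (M + 1) = G * M + G := by ring
    rw [h1, Finset.sum_range_succ, mul_add]
    rw [Finset.range_eq_Ico, ← Finset.sum_Ico_consecutive _ (Nat.zero_le _) (Nat.le_add_right _ _)]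
    rw [← Finset.range_eq_Ico, ih]
    congr 1
    have hc : ∀ j ∈ Finset.Ico (G*M) (G*M + G), f (j / G) = f M := by
      intro j hj
      simp only [Finset.mem_Ico] at hj
      congr 1
      exact Nat.div_eq_of_lt_le (by rw [mul_comm]; exact hj.1)
        (by rw [add_mul, one_mul, mul_comm]; omega)
    rw [Finset.sum_congr rfl hc, Finset.sum_const, Nat.card_Ico]
    simp [nsmul_eq_mul]

lemma aux_sum_inv (G T : ℕ) (hG : 1 ≤ G) (hT : 1 ≤ T) :
    ∑ t ∈ Finset.Icc 1 T, 1 / Real.sqrt ((max 1 ((t - 1) / G) : ℕ) : ℝ)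
      ≤ (G : ℝ) + 2 * Real.sqrt ((G : ℝ) * T) := by
  set q : ℕ → ℝ := fun k => 1 / Real.sqrt ((max 1 k : ℕ) : ℝ) with hq
  set K := (T - 1) / G with hKdef
  have hTle : T ≤ G * (K + 1) := by
    have h := (Nat.div_lt_iff_lt_mul (show 0 < G by omega)).mp (Nat.lt_succ_self ((T-1)/G))
    have h2 : G * (K + 1) = ((T-1)/G).succ * G := by
      rw [hKdef, Nat.succ_eq_add_one, mul_comm]
    omega
  have step1 : ∑ t ∈ Finset.Icc 1 T, q ((t-1)/G)
      ≤ ∑ t ∈ Finset.Icc 1 (G*(K+1)), q ((t-1)/G) := by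
    apply Finset.sum_le_sum_of_subset_of_nonneg
    · exact Finset.Icc_subset_Icc_right hTle
    · intro t _ _; positivity
  have step2 : ∑ t ∈ Finset.Icc 1 (G*(K+1)), q ((t-1)/G)
      = ∑ j ∈ Finset.range (G*(K+1)), q (j/G) := by
    rw [← Finset.Ico_add_one_right_eq_Icc, Finset.sum_Ico_eq_sum_range]
    simp
  have step3 : ∑ j ∈ Finset.range (G*(K+1)), q (j/G) = G * ∑ k ∈ Finset.range (K+1), q k :=
    aux_group G (K+1) hG q
  have step4 : ∑ k ∈ Finset.range (K+1), q k = 1 + ∑ k ∈ Finset.Icc 1 K, 1 / Real.sqrt k := by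
    rw [Finset.sum_range_succ']
    have h0 : q 0 = 1 := by simp [hq]
    have h1 : ∀ i, q (i+1) = 1 / Real.sqrt (i+1 : ℕ) := by
      intro i; simp [hq, Nat.max_eq_right (by omega : 1 ≤ i+1)]
    rw [h0]
    rw [Finset.sum_congr rfl (fun i _ => h1 i)]
    rw [← Finset.Ico_add_one_right_eq_Icc, Finset.sum_Ico_eq_sum_range]
    simp [add_comm]
  have step5 := aux_sqrt_sum K
  have hGK : (G:ℝ) * Real.sqrt K ≤ Real.sqrt ((G:ℝ) * T) := by
    have hGK' : (G:ℝ) * Real.sqrt K = Real.sqrt ((G:ℝ)^2 * K) := by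
      rw [Real.sqrt_mul (by positivity), Real.sqrt_sq (by positivity)]
    rw [hGK']
    apply Real.sqrt_le_sqrt
    have hnat : G * K ≤ T := by
      have := Nat.div_mul_le_self (T-1) G
      calc G * K = (T-1)/G * G := by rw [mul_comm]
        _ ≤ T - 1 := this
        _ ≤ T := by omega
    have hcast : ((G * K : ℕ) : ℝ) ≤ (T : ℝ) := by exact_mod_cast hnat
    have hG1 : (1:ℝ) ≤ (G:ℝ) := by exact_mod_cast hG
    push_cast at hcast ⊢
    nlinarith [hcast, hG1]
  calc ∑ t ∈ Finset.Icc 1 T, q ((t-1)/G) ≤ ∑ j ∈ Finset.range (G*(K+1)), q (j/G) := by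
        rw [← step2]; exact step1
    _ = G * (1 + ∑ k ∈ Finset.Icc 1 K, 1 / Real.sqrt k) := by rw [step3, step4]
    _ ≤ G * (1 + 2 * Real.sqrt K) := by
        apply mul_le_mul_of_nonneg_left _ (by positivity)
        linarith
    _ = G + 2 * ((G:ℝ) * Real.sqrt K) := by ring
    _ ≤ G + 2 * Real.sqrt ((G:ℝ) * T) := by linarith

lemma aux_nlow (G : ℕ) (hG : 1 ≤ G) (m : ℕ → ℕ)
    (h : ∀ t, 1 ≤ t → m t + 1 ≤ m (t + G)) : ∀ t, 1 ≤ t → (t - 1) / G ≤ m t := by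
  intro t
  induction t using Nat.strong_induction_on with
  | _ t ih =>
    intro ht
    by_cases hc : t - 1 < G
    · have : (t - 1) / G = 0 := Nat.div_eq_of_lt hc
      omega
    · have h1 : 1 ≤ t - G := by omega
      have ih2 := ih (t - G) (by omega) h1
      have h3 := h (t - G) h1
      have h4 : t - G + G = t := by omega
      rw [h4] at h3
      have h5 : (t - 1) / G = (t - 1 - G) / G + 1 := Nat.div_eq_sub_div (by omega) (by omega)
      have h6 : t - 1 - G = t - G - 1 := by omega
      rw [h6] at h5
      omega

lemma aux_ratio {N : ℕ} (hN : 0 < N) (γ : ℝ) (hγ : 0 < γ) (a b : Fin N → ℝ)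
    (ha : ∀ i, γ ≤ a i) (hb : ∀ i, γ ≤ b i) :
    ∑ i, |a i / (∑ j, a j) - b i / (∑ j, b j)|
      ≤ (2 / ((N : ℝ) * γ)) * ∑ i, |a i - b i| := by
  set A := ∑ j, a j with hA
  set B := ∑ j, b j with hB
  have hNγ : (0:ℝ) < (N:ℝ) * γ := by positivity
  have hAγ : (N : ℝ) * γ ≤ A := by
    calc (N:ℝ) * γ = ∑ _j : Fin N, γ := by simp [mul_comm]
      _ ≤ A := Finset.sum_le_sum fun j _ => ha j
  have hBγ : (N : ℝ) * γ ≤ B := by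
    calc (N:ℝ) * γ = ∑ _j : Fin N, γ := by simp [mul_comm]
      _ ≤ B := Finset.sum_le_sum fun j _ => hb j
  have hA0 : 0 < A := lt_of_lt_of_le hNγ hAγ
  have hB0 : 0 < B := lt_of_lt_of_le hNγ hBγ
  have hBA : |B - A| ≤ ∑ i, |a i - b i| := by
    have : B - A = ∑ i, (b i - a i) := by rw [hA, hB, Finset.sum_sub_distrib]
    rw [this]
    calc |∑ i, (b i - a i)| ≤ ∑ i, |b i - a i| := Finset.abs_sum_le_sum_abs _ _
      _ = ∑ i, |a i - b i| := by simp [abs_sub_comm]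
  have hpt : ∀ i, |a i / A - b i / B| ≤ |a i - b i| / A + (b i / B) * (|B - A| / A) := by
    intro i
    have key : a i / A - b i / B = (a i - b i) / A + (b i / B) * ((B - A) / A) := by
      field_simp
      ring
    rw [key]
    calc |(a i - b i) / A + (b i / B) * ((B - A) / A)|
        ≤ |(a i - b i) / A| + |(b i / B) * ((B - A) / A)| := abs_add_le _ _
      _ = |a i - b i| / A + (b i / B) * (|B - A| / A) := by
          simp only [abs_mul, abs_div, abs_of_pos hA0, abs_of_pos hB0,
            abs_of_pos (lt_of_lt_of_le hγ (hb i))]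
  have hsum1 : ∑ i, (b i / B) = 1 := by
    rw [← Finset.sum_div, ← hB, div_self (ne_of_gt hB0)]
  calc ∑ i, |a i / A - b i / B|
      ≤ ∑ i, (|a i - b i| / A + (b i / B) * (|B - A| / A)) := Finset.sum_le_sum fun i _ => hpt i
    _ = (∑ i, |a i - b i|) / A + (|B - A| / A) * ∑ i, (b i / B) := by
        rw [Finset.sum_add_distrib, ← Finset.sum_div]
        congr 1
        rw [Finset.mul_sum]
        exact Finset.sum_congr rfl fun i _ => by ring
    _ = (∑ i, |a i - b i|) / A + |B - A| / A := by rw [hsum1, mul_one]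
    _ ≤ (∑ i, |a i - b i|) / A + (∑ i, |a i - b i|) / A := by
        gcongr
    _ ≤ (∑ i, |a i - b i|) / ((N:ℝ)*γ) + (∑ i, |a i - b i|) / ((N:ℝ)*γ) := by
        gcongr
    _ = (2 / ((N : ℝ) * γ)) * ∑ i, |a i - b i| := by ring

set_option maxHeartbeats 1000000 in
/-- deterministic fairness-regret bound (Theorem 3 skeleton). -/
theorem fairness_regret_bound
    (N G t₀ T : ℕ) (hN : 2 ≤ N) (hG : 1 ≤ G) (hT : t₀ < T)
    (δ γ L ω η : ℝ) (hδ0 : 0 < δ) (hδ1 : δ ≤ 1)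
    (hγ : 0 < γ) (hL : 0 < L) (hωη : ω ≤ η) (hη : η < 1)
    (g : ℝ → ℝ) (hg : ∀ x : ℝ, γ ≤ g x)
    (hLip : ∀ x y : ℝ, |g x - g y| ≤ L * |x - y|)
    (n : Fin N → ℕ → Fin 2 → Fin 2 → ℕ)
    (hn : ∀ (i : Fin N) (t : ℕ) (s a : Fin 2), 1 ≤ t →
      n i t s a + 1 ≤ n i (t + G) s a)
    (d : Fin N → ℕ → Fin 2 → Fin 2 → ℝ)
    (hd : ∀ (i : Fin N) (t : ℕ) (s a : Fin 2),
      d i t s a =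
        Real.sqrt (4 * Real.log (8 * N * (t : ℝ) ^ 4 / δ) / (max 1 (n i t s a) : ℕ)))
    (μ : ℕ → Fin N → ℝ) (μs : Fin N → ℝ)
    (hμ : ∀ t : ℕ, t₀ < t → t ≤ T → ∀ i : Fin N,
      |μ t i - μs i| ≤
        (d i t 1 1 + 2 * d i t 0 1 + d i t 1 0 + 2 * d i t 0 0) /
          ((1 - η) * (1 - ω))) :
    (∑ t ∈ Finset.Icc 1 T, ∑ i,
        |g (μs i) / (∑ j, g (μs j)) - g (μ t i) / (∑ j, g (μ t j))|) ≤
      (N : ℝ) * t₀ +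
        48 * L * Real.sqrt (Real.log (8 * N * T / δ)) *
          ((G : ℝ) + 2 * Real.sqrt ((G : ℝ) * T)) / (γ * (1 - η) * (1 - ω)) ∧
    (G ≤ T →
      (∑ t ∈ Finset.Icc 1 T, ∑ i,
          |g (μs i) / (∑ j, g (μs j)) - g (μ t i) / (∑ j, g (μ t j))|) ≤
        (N : ℝ) * t₀ +
          144 * L * Real.sqrt ((G : ℝ) * T * Real.log (8 * N * T / δ)) /
            (γ * (1 - η) * (1 - ω))) := by
  have hT1 : 1 ≤ T := by omega
  have hω : ω < 1 := lt_of_le_of_lt hωη hη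
  have hη' : (0:ℝ) < 1 - η := by linarith
  have hω' : (0:ℝ) < 1 - ω := by linarith
  have hC : (0:ℝ) < (1 - η) * (1 - ω) := mul_pos hη' hω'
  have hN0 : 0 < N := by omega
  have hNR : (2:ℝ) ≤ (N:ℝ) := by exact_mod_cast hN
  have hTR : (1:ℝ) ≤ (T:ℝ) := by exact_mod_cast hT1
  set L0 := Real.log (8 * N * T / δ) with hL0def
  have hL0 : 0 ≤ L0 := by
    apply Real.log_nonneg
    rw [le_div_iff₀ hδ0]
    nlinarith
  set S := Real.sqrt L0 with hSdef
  have hS0 : 0 ≤ S := Real.sqrt_nonneg _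
  -- the key per-(i,t,s,a) bound on d
  have hdb : ∀ (i : Fin N) (t : ℕ) (s a : Fin 2), 1 ≤ t → t ≤ T →
      d i t s a ≤ 4 * S / Real.sqrt ((max 1 ((t - 1) / G) : ℕ) : ℝ) := by
    intro i t s a ht1 htT
    rw [hd]
    have hnl : (t - 1) / G ≤ n i t s a :=
      aux_nlow G hG (fun u => n i u s a) (fun u hu => hn i u s a hu) t ht1
    have hm : ((max 1 ((t-1)/G) : ℕ) : ℝ) ≤ ((max 1 (n i t s a) : ℕ) : ℝ) := by
      exact_mod_cast (by omega : (max 1 ((t-1)/G) : ℕ) ≤ max 1 (n i t s a))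
    have hmk1 : (1:ℝ) ≤ ((max 1 ((t-1)/G) : ℕ) : ℝ) := by
      exact_mod_cast le_max_left 1 ((t-1)/G)
    have htR : (1:ℝ) ≤ (t:ℝ) := by exact_mod_cast ht1
    have htTR : (t:ℝ) ≤ (T:ℝ) := by exact_mod_cast htT
    have hlog : Real.log (8 * N * (t:ℝ)^4 / δ) ≤ 4 * L0 := by
      have harg : (0:ℝ) < 8 * N * (t:ℝ)^4 / δ := by
        apply div_pos _ hδ0
        have ht4p : (0:ℝ) < (t:ℝ)^4 := pow_pos (by linarith) 4
        nlinarith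
      have hAq : (1:ℝ) ≤ 8 * N / δ := by
        rw [le_div_iff₀ hδ0]; nlinarith
      have hle : 8 * N * (t:ℝ)^4 / δ ≤ (8 * N * T / δ)^4 := by
        have e1 : 8 * (N:ℝ) * (t:ℝ)^4 / δ = (8 * N / δ) * (t:ℝ)^4 := by ring
        have e2 : (8 * (N:ℝ) * T / δ)^4 = (8 * N / δ)^4 * (T:ℝ)^4 := by ring
        rw [e1, e2]
        have ht4 : (t:ℝ)^4 ≤ (T:ℝ)^4 := by
          apply pow_le_pow_left₀ (by linarith) htTR
        have hT4 : (1:ℝ) ≤ (T:ℝ)^4 := by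
          calc (1:ℝ) = 1^4 := by norm_num
            _ ≤ (T:ℝ)^4 := pow_le_pow_left₀ (by norm_num) hTR 4
        have haa : (8 * (N:ℝ) / δ) ≤ (8 * N / δ)^4 := le_self_pow₀ hAq (by norm_num)
        calc (8 * (N:ℝ) / δ) * (t:ℝ)^4 ≤ (8 * N / δ) * (T:ℝ)^4 :=
            mul_le_mul_of_nonneg_left ht4 (by linarith)
          _ ≤ (8 * N / δ)^4 * (T:ℝ)^4 :=
            mul_le_mul_of_nonneg_right haa (by positivity)
      calc Real.log (8 * N * (t:ℝ)^4 / δ) ≤ Real.log ((8 * N * T / δ)^4) :=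
            Real.log_le_log harg hle
        _ = 4 * L0 := by rw [Real.log_pow]; push_cast; ring
    have hnum : 4 * Real.log (8 * N * (t:ℝ)^4 / δ) / ((max 1 (n i t s a) : ℕ) : ℝ)
        ≤ 16 * L0 / ((max 1 ((t-1)/G) : ℕ) : ℝ) := by
      apply div_le_div₀ (by positivity) (by linarith) (by linarith) hm
    calc Real.sqrt (4 * Real.log (8 * N * (t:ℝ)^4 / δ) / ((max 1 (n i t s a) : ℕ) : ℝ))
        ≤ Real.sqrt (16 * L0 / ((max 1 ((t-1)/G) : ℕ) : ℝ)) := Real.sqrt_le_sqrt hnum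
      _ = 4 * S / Real.sqrt ((max 1 ((t-1)/G) : ℕ) : ℝ) := by
          rw [Real.sqrt_div (by positivity),
            show (16:ℝ) * L0 = 4^2 * L0 by norm_num,
            Real.sqrt_mul (by positivity), Real.sqrt_sq (by norm_num)]
  -- per-episode regret notation
  set R : ℕ → ℝ := fun t => ∑ i, |g (μs i) / (∑ j, g (μs j)) - g (μ t i) / (∑ j, g (μ t j))|
    with hRdef
  have hgpos : ∀ x, 0 < g x := fun x => lt_of_lt_of_le hγ (hg x)
  haveI : Nonempty (Fin N) := ⟨⟨0, hN0⟩⟩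
  have hsumpos : ∀ (v : Fin N → ℝ), 0 < ∑ j, g (v j) := by
    intro v
    apply Finset.sum_pos (fun j _ => hgpos (v j))
    exact Finset.univ_nonempty
  -- crude bound R t ≤ N
  have hRN : ∀ t, R t ≤ (N:ℝ) := by
    intro t
    have hterm : ∀ i : Fin N,
        |g (μs i) / (∑ j, g (μs j)) - g (μ t i) / (∑ j, g (μ t j))| ≤ 1 := by
      intro i
      have h1 : g (μs i) / (∑ j, g (μs j)) ≤ 1 := by
        rw [div_le_one (hsumpos μs)]
        exact Finset.single_le_sum (fun j _ => le_of_lt (hgpos (μs j))) (Finset.mem_univ i)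
      have h2 : g (μ t i) / (∑ j, g (μ t j)) ≤ 1 := by
        rw [div_le_one (hsumpos (μ t))]
        exact Finset.single_le_sum (fun j _ => le_of_lt (hgpos (μ t j))) (Finset.mem_univ i)
      have h3 : 0 ≤ g (μs i) / (∑ j, g (μs j)) :=
        div_nonneg (le_of_lt (hgpos _)) (le_of_lt (hsumpos _))
      have h4 : 0 ≤ g (μ t i) / (∑ j, g (μ t j)) :=
        div_nonneg (le_of_lt (hgpos _)) (le_of_lt (hsumpos _))
      rw [abs_sub_le_iff]
      constructor <;> linarith
    calc R t ≤ ∑ _i : Fin N, (1:ℝ) := Finset.sum_le_sum fun i _ => hterm i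
      _ = (N:ℝ) := by simp
  -- refined bound for t₀ < t ≤ T
  have hRt : ∀ t, t₀ < t → t ≤ T →
      R t ≤ (48 * L * S / (γ * (1-η) * (1-ω))) *
        (1 / Real.sqrt ((max 1 ((t-1)/G) : ℕ) : ℝ)) := by
    intro t ht0 htT
    have ht1 : 1 ≤ t := by omega
    have hr := aux_ratio hN0 γ hγ (fun i => g (μs i)) (fun i => g (μ t i))
      (fun i => hg _) (fun i => hg _)
    have hstep2 : ∑ i, |g (μs i) - g (μ t i)| ≤
        L * ∑ i, |μ t i - μs i| := by
      rw [Finset.mul_sum]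
      apply Finset.sum_le_sum
      intro i _
      calc |g (μs i) - g (μ t i)| ≤ L * |μs i - μ t i| := hLip _ _
        _ = L * |μ t i - μs i| := by rw [abs_sub_comm]
    set mk : ℝ := Real.sqrt ((max 1 ((t-1)/G) : ℕ) : ℝ) with hmkdef
    have hmk1 : (1:ℝ) ≤ ((max 1 ((t-1)/G) : ℕ) : ℝ) := by
      exact_mod_cast le_max_left 1 ((t-1)/G)
    have hmkpos : 0 < mk := by
      rw [hmkdef]; apply Real.sqrt_pos.mpr; linarith
    have hstep3 : ∑ i, |μ t i - μs i| ≤ (N:ℝ) * ((24 * S / mk) / ((1-η)*(1-ω))) := by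
      calc ∑ i, |μ t i - μs i|
          ≤ ∑ _i : Fin N, ((24 * S / mk) / ((1-η)*(1-ω))) := by
            apply Finset.sum_le_sum
            intro i _
            refine le_trans (hμ t ht0 htT i) ?_
            have b1 := hdb i t 1 1 ht1 htT
            have b2 := hdb i t 0 1 ht1 htT
            have b3 := hdb i t 1 0 ht1 htT
            have b4 := hdb i t 0 0 ht1 htT
            rw [← hmkdef] at b1 b2 b3 b4
            gcongr
            have e24 : (24:ℝ) * S / mk = 4*S/mk + 2*(4*S/mk) + 4*S/mk + 2*(4*S/mk) := by
              ring
            rw [e24]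
            gcongr
        _ = (N:ℝ) * ((24 * S / mk) / ((1-η)*(1-ω))) := by
            rw [Finset.sum_const]
            simp [nsmul_eq_mul]
    have hr : R t ≤ (2 / ((N : ℝ) * γ)) * ∑ i, |g (μs i) - g (μ t i)| :=
      aux_ratio hN0 γ hγ (fun i => g (μs i)) (fun i => g (μ t i))
        (fun i => hg _) (fun i => hg _)
    have hNne : ((N:ℝ)) ≠ 0 := by positivity
    have hmkne : mk ≠ 0 := ne_of_gt hmkpos
    have hfinal : (2 / ((N : ℝ) * γ)) * (L * ((N:ℝ) * ((24 * S / mk) / ((1-η)*(1-ω)))))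
        = (48 * L * S / (γ * (1-η) * (1-ω))) * (1 / mk) := by
      field_simp
      ring
    have h2 : (2 / ((N : ℝ) * γ)) * ∑ i, |g (μs i) - g (μ t i)|
        ≤ (2 / ((N : ℝ) * γ)) * (L * ((N:ℝ) * ((24 * S / mk) / ((1-η)*(1-ω))))) := by
      apply mul_le_mul_of_nonneg_left _ (by positivity)
      calc ∑ i, |g (μs i) - g (μ t i)| ≤ L * ∑ i, |μ t i - μs i| := hstep2
        _ ≤ L * ((N:ℝ) * ((24 * S / mk) / ((1-η)*(1-ω)))) := by
            apply mul_le_mul_of_nonneg_left hstep3 (le_of_lt hL)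
    rw [← hfinal]
    exact le_trans hr h2
  -- split the sum at t₀
  have hsplit : ∑ t ∈ Finset.Icc 1 T, R t
      = ∑ t ∈ Finset.Ioc 0 t₀, R t + ∑ t ∈ Finset.Ioc t₀ T, R t := by
    rw [show (1:ℕ) = 0 + 1 from rfl, Finset.Icc_add_one_left_eq_Ioc]
    exact (Finset.sum_Ioc_consecutive _ (Nat.zero_le t₀) (le_of_lt hT)).symm
  have hfirst : ∑ t ∈ Finset.Ioc 0 t₀, R t ≤ (N:ℝ) * t₀ := by
    calc ∑ t ∈ Finset.Ioc 0 t₀, R t ≤ ∑ _t ∈ Finset.Ioc 0 t₀, (N:ℝ) :=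
          Finset.sum_le_sum fun t _ => hRN t
      _ = (N:ℝ) * t₀ := by
          rw [Finset.sum_const, Nat.card_Ioc]
          simp [nsmul_eq_mul, mul_comm]
  set c := 48 * L * S / (γ * (1-η) * (1-ω)) with hcdef
  have hc0 : 0 ≤ c := by positivity
  have hsecond : ∑ t ∈ Finset.Ioc t₀ T, R t
      ≤ c * ((G:ℝ) + 2 * Real.sqrt ((G:ℝ) * T)) := by
    calc ∑ t ∈ Finset.Ioc t₀ T, R t
        ≤ ∑ t ∈ Finset.Ioc t₀ T, c * (1 / Real.sqrt ((max 1 ((t-1)/G) : ℕ) : ℝ)) := by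
          apply Finset.sum_le_sum
          intro t ht
          simp only [Finset.mem_Ioc] at ht
          exact hRt t ht.1 ht.2
      _ ≤ ∑ t ∈ Finset.Icc 1 T, c * (1 / Real.sqrt ((max 1 ((t-1)/G) : ℕ) : ℝ)) := by
          apply Finset.sum_le_sum_of_subset_of_nonneg
          · intro t ht
            simp only [Finset.mem_Ioc] at ht
            simp only [Finset.mem_Icc]
            omega
          · intro t _ _
            positivity
      _ = c * ∑ t ∈ Finset.Icc 1 T, 1 / Real.sqrt ((max 1 ((t-1)/G) : ℕ) : ℝ) := by
          rw [Finset.mul_sum]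
      _ ≤ c * ((G:ℝ) + 2 * Real.sqrt ((G:ℝ) * T)) :=
          mul_le_mul_of_nonneg_left (aux_sum_inv G T hG hT1) hc0
  have hmain : ∑ t ∈ Finset.Icc 1 T, R t
      ≤ (N:ℝ) * t₀ + c * ((G:ℝ) + 2 * Real.sqrt ((G:ℝ) * T)) := by
    rw [hsplit]; linarith
  have hce : c * ((G:ℝ) + 2 * Real.sqrt ((G:ℝ) * T))
      = 48 * L * S * ((G:ℝ) + 2 * Real.sqrt ((G:ℝ) * T)) / (γ * (1 - η) * (1 - ω)) := by
    rw [hcdef]; ring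
  constructor
  · rw [show (∑ t ∈ Finset.Icc 1 T, ∑ i,
        |g (μs i) / (∑ j, g (μs j)) - g (μ t i) / (∑ j, g (μ t j))|)
        = ∑ t ∈ Finset.Icc 1 T, R t from rfl]
    linarith
  · intro hGT
    have hGle : (G:ℝ) ≤ Real.sqrt ((G:ℝ) * T) := by
      have hGT' : (G:ℝ) ≤ (T:ℝ) := by exact_mod_cast hGT
      have hG0 : (0:ℝ) ≤ (G:ℝ) := by positivity
      calc (G:ℝ) = Real.sqrt ((G:ℝ)^2) := (Real.sqrt_sq hG0).symm
        _ ≤ Real.sqrt ((G:ℝ) * T) := Real.sqrt_le_sqrt (by nlinarith)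
    have hprod : Real.sqrt ((G:ℝ) * T) * S = Real.sqrt ((G:ℝ) * T * L0) :=
      (Real.sqrt_mul (by positivity) L0).symm
    have hnum : 48 * L * S * ((G:ℝ) + 2 * Real.sqrt ((G:ℝ) * T))
        ≤ 144 * L * Real.sqrt ((G:ℝ) * T * L0) := by
      have hsq : 0 ≤ Real.sqrt ((G:ℝ) * T) := Real.sqrt_nonneg _
      have h1 : S * ((G:ℝ) + 2 * Real.sqrt ((G:ℝ) * T))
          ≤ 3 * (Real.sqrt ((G:ℝ) * T) * S) := by nlinarith
      calc 48 * L * S * ((G:ℝ) + 2 * Real.sqrt ((G:ℝ) * T))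
          = 48 * L * (S * ((G:ℝ) + 2 * Real.sqrt ((G:ℝ) * T))) := by ring
        _ ≤ 48 * L * (3 * (Real.sqrt ((G:ℝ) * T) * S)) := by
            apply mul_le_mul_of_nonneg_left h1 (by positivity)
        _ = 144 * L * (Real.sqrt ((G:ℝ) * T) * S) := by ring
        _ = 144 * L * Real.sqrt ((G:ℝ) * T * L0) := by rw [hprod]
    have hdenpos : (0:ℝ) < γ * (1 - η) * (1 - ω) := by
      have := mul_pos (mul_pos hγ hη') hω'
      linarith [this]
    have hdiv : 48 * L * S * ((G:ℝ) + 2 * Real.sqrt ((G:ℝ) * T)) / (γ * (1 - η) * (1 - ω))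
        ≤ 144 * L * Real.sqrt ((G:ℝ) * T * L0) / (γ * (1 - η) * (1 - ω)) := by
      exact (div_le_div_iff_of_pos_right hdenpos).mpr hnum
    linarith [hmain, hce, hdiv]
end
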